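/- Let A be a Grothendieck abelian category whose global dimension is at most d, and let (D^{≤0}, D^{>0}) denote the canonical t-structure on the unbounded derived category D(A). Then Hom(X, Y) = 0 for all X ∈ D^{≥0} and all Y ∈ D^{<-d-2}. -/

import Mathlib

/-!
If `X ∈ D^{≥n}` and `Y ∈ D^{≤n}`, every morphism `X ⟶ Y` factors through an object of the heart
placed in degree `n`: write it as a roof `X ← W → L` with `L` strictly `≤ n`; the chain map
`W → L` factors through the stupid truncation `σ^{≤n} W`, whose cohomology is concentrated in
degree `n` because `W` is acyclic below `n`. Applying this first with `n = 0` and then with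
`n = -d-3`, a morphism `X ⟶ Y` factors through a morphism `M[0] ⟶ N[d+3]`, an element of
`Ext^{d+3}(M, N) = 0`.
-/

universe t w w₂ v u v' u'

open CategoryTheory Category Limits Pretriangulated Opposite

section Defs

variable (C : Type u) [Category.{v} C]

/-- The global dimension of an abelian category is at most `d` if
`Ext^i(X, Y) = 0` for all `i > d`, where Ext-groups are interpreted as
morphisms `X ⟶ Y⟦i⟧` in the derived category between the corresponding
objects concentrated in degree `0`. -/
def GlobalDimLE [Abelian C] [HasDerivedCategory.{w} C] (d : ℕ) : Prop :=
  ∀ (X Y : C) (i : ℤ), (d : ℤ) < i →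
    Subsingleton ((DerivedCategory.singleFunctor C 0).obj X ⟶
      (((DerivedCategory.singleFunctor C 0).obj Y)⟦i⟧))

variable {C}

/-- An object of the derived category is (cohomologically) bounded if its
cohomology is concentrated in finitely many degrees; these objects form
the bounded derived category `D^b`. -/
def IsBoundedObj [Abelian C] [HasDerivedCategory.{w} C] (X : DerivedCategory C) : Prop :=
  {i : ℤ | ¬ IsZero ((DerivedCategory.homologyFunctor C i).obj X)}.Finite

/-- An object `X` of a preadditive category is compact if `Hom(X, -)` commutes with
arbitrary (set-indexed) coproducts, i.e. the additive coyoneda functor of `X`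
preserves coproducts. -/
def IsCompactObject {D : Type u'} [Category.{v'} D] [Preadditive D] (X : D) : Prop :=
  ∀ ι : Type t, Nonempty (PreservesColimitsOfShape (Discrete ι)
    (preadditiveCoyoneda.obj (op X)))

end Defs

open ZeroObject

namespace HomologicalComplex

variable {ι ι' : Type*} {c : ComplexShape ι} {c' : ComplexShape ι'}
  {C : Type*} [Category* C] [HasZeroMorphisms C] [HasZeroObject C]
  {K L : HomologicalComplex C c'} (e : c.Embedding c') [e.IsTruncLE]

variable (K) in
noncomputable def πStupidTrunc : K ⟶ K.stupidTrunc e :=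
  e.liftExtend (𝟙 _) (fun _ hj => hj.false_of_isTruncLE.elim)

variable (K) in
lemma πStupidTrunc_f {i : ι} {i' : ι'} (hi : e.f i = i') :
    (K.πStupidTrunc e).f i' = (K.stupidTruncXIso e hi).inv := by
  subst hi
  refine (ComplexShape.Embedding.liftExtend_f _ _ _ rfl).trans ?_
  simp [stupidTrunc, stupidTruncXIso, restrictionXIso]

lemma πStupidTrunc_naturality (φ : K ⟶ L) :
    K.πStupidTrunc e ≫ stupidTruncMap φ e = φ ≫ L.πStupidTrunc e := by
  ext i'
  by_cases hi : ∃ i, e.f i = i'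
  · obtain ⟨i, hi⟩ := hi
    rw [← cancel_mono (L.stupidTruncXIso e hi).hom]
    simp [πStupidTrunc_f K e hi, πStupidTrunc_f L e hi]
  · exact (L.isZero_stupidTrunc_X e i' (by simpa using hi)).eq_of_tgt _ _

instance isIso_πStupidTrunc [K.IsStrictlySupported e] : IsIso (K.πStupidTrunc e) := by
  have (i' : ι') : IsIso ((K.πStupidTrunc e).f i') := by
    by_cases hi : ∃ i, e.f i = i'
    · obtain ⟨i, hi⟩ := hi
      rw [πStupidTrunc_f K e hi]
      infer_instance
    · have hi : ∀ i, e.f i ≠ i' := by simpa using hi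
      exact ⟨0, (K.isZero_X_of_isStrictlySupported e i' hi).eq_of_src _ _,
        (K.isZero_stupidTrunc_X e i' hi).eq_of_src _ _⟩
  exact Hom.isIso_of_components _

noncomputable def descStupidTrunc (φ : K ⟶ L) [L.IsStrictlySupported e] : K.stupidTrunc e ⟶ L :=
  stupidTruncMap φ e ≫ inv (L.πStupidTrunc e)

@[simp]
lemma πStupidTrunc_descStupidTrunc (φ : K ⟶ L) [L.IsStrictlySupported e] :
    K.πStupidTrunc e ≫ descStupidTrunc e φ = φ := by
  rw [descStupidTrunc, ← assoc, πStupidTrunc_naturality, assoc, IsIso.hom_inv_id, comp_id]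

variable [CategoryWithHomology C] (K) in
lemma stupidTrunc_exactAt_iff {j : ι} (hj : ¬ e.BoundaryLE j) :
    (K.stupidTrunc e).ExactAt (e.f j) ↔ K.ExactAt (e.f j) := by
  rw [stupidTrunc, extend_exactAt_iff _ e rfl,
    exactAt_iff' _ (c.prev j) j (c.next j) rfl rfl,
    exactAt_iff' _ _ _ _ (e.prev_f rfl) (e.next_f_of_not_boundaryLE rfl hj)]
  exact ShortComplex.exact_iff_of_iso (restriction.sc'Iso K e _ _ _ rfl rfl rfl
    (e.prev_f rfl) (e.next_f_of_not_boundaryLE rfl hj))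

end HomologicalComplex

namespace CochainComplex

variable {C : Type*} [Category* C] [Abelian C]

instance isGE_stupidTrunc (K : CochainComplex C ℤ) (n : ℤ) [K.IsGE n] :
    IsGE (K.stupidTrunc (ComplexShape.embeddingUpIntLE n)) n := by
  rw [isGE_iff]
  intro i hi
  obtain ⟨j, rfl⟩ : ∃ j : ℕ, n - j = i := ⟨(n - i).toNat, by omega⟩
  refine (K.stupidTrunc_exactAt_iff _ (j := j) ?_).2 (K.exactAt_of_isGE n _ hi)
  rw [ComplexShape.boundaryLE_embeddingUpIntLE_iff]
  omega

end CochainComplex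

namespace DerivedCategory

variable {C : Type*} [Category* C] [Abelian C] [HasDerivedCategory C]

open HomologicalComplex ComplexShape in
lemma exists_fac_singleFunctor_obj_of_isGE_of_isLE {X Y : DerivedCategory C} (n : ℤ)
    [X.IsGE n] [Y.IsLE n] (φ : X ⟶ Y) : ∃ (M : C) (a : X ⟶ (singleFunctor C n).obj M)
      (b : (singleFunctor C n).obj M ⟶ Y), φ = a ≫ b := by
  obtain ⟨L, _, ⟨eY⟩⟩ := Y.exists_iso_Q_obj_of_isLE n
  let eX := Q.objObjPreimageIso X
  obtain ⟨W, s, _, g, hφ⟩ := right_fac (eX.hom ≫ φ ≫ eY.hom)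
  have : W.IsGE n := by
    rw [← isGE_Q_obj_iff]
    exact TStructure.t.isGE_of_iso (asIso (Q.map s) ≪≫ eX).symm n
  obtain ⟨M, ⟨eM⟩⟩ := exists_iso_singleFunctor_obj_of_isGE_of_isLE
    (Q.obj (W.stupidTrunc (embeddingUpIntLE n))) n
  refine ⟨M, eX.inv ≫ inv (Q.map s) ≫ Q.map (W.πStupidTrunc _) ≫ eM.hom,
    eM.inv ≫ Q.map (descStupidTrunc _ g) ≫ eY.inv, ?_⟩
  rw [← cancel_epi eX.hom, ← cancel_mono eY.hom]
  simp [← Q.map_comp_assoc, hφ]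

end DerivedCategory

namespace GlobalDimLE

variable {A : Type*} [Category* A] [Abelian A] [HasDerivedCategory.{w} A] {d : ℕ}

open DerivedCategory in
lemma hom_singleFunctor_eq_zero (hA : GlobalDimLE.{w} A d) {M N : A} {a b : ℤ}
    (hab : (d : ℤ) < a - b) (f : (singleFunctor A a).obj M ⟶ (singleFunctor A b).obj N) :
    f = 0 := by
  let e₁ := ((singleFunctors A).shiftIso a 0 a (by omega)).app M
  let e₂ := ((singleFunctors A).shiftIso a (b - a) b (by omega)).app N
  let e₃ := ((singleFunctors A).shiftIso (a - b) (b - a) 0 (by omega)).app N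
  have h : e₁.inv ≫ (shiftFunctor _ a).map f ≫ e₂.hom ≫ e₃.inv = 0 :=
    (hA M N (a - b) hab).elim _ _
  apply (shiftFunctor _ a).map_injective
  rw [Functor.map_zero, ← cancel_epi e₁.inv, ← cancel_mono (e₂.hom ≫ e₃.inv), assoc, h]
  simp

end GlobalDimLE

/-- **Lemma (Hom-vanishing in `D(A)` for Grothendieck categories).**
Let `A` be a Grothendieck abelian category of global dimension at most `d` and let
`(D^{≤0}, D^{>0})` be the canonical t-structure on `D(A)`. Then `Hom(X, Y) = 0`
for all `X ∈ D^{≥0}` (i.e. `H^i X = 0` for `i < 0`) and all `Y ∈ D^{< -d-2}`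
(i.e. `H^i Y = 0` for `i ≥ -d-2`). -/
theorem hom_eq_zero_of_gldim_le
    (A : Type u) [Category.{v} A] [Abelian A] [HasDerivedCategory.{w} A]
    (d : ℕ) (_ : GlobalDimLE.{w} A d)
    (X Y : DerivedCategory A)
    (hX : ∀ i : ℤ, i < 0 → IsZero ((DerivedCategory.homologyFunctor A i).obj X))
    (hY : ∀ i : ℤ, -(d : ℤ) - 2 ≤ i → IsZero ((DerivedCategory.homologyFunctor A i).obj Y)) :
    Subsingleton (X ⟶ Y) := by
  have : X.IsGE 0 := (X.isGE_iff 0).2 hX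
  have : Y.IsLE (-d - 3) := (Y.isLE_iff _).2 fun i hi => hY i (by omega)
  have : Y.IsLE 0 := DerivedCategory.TStructure.t.isLE_of_le Y (-d - 3) 0
  suffices ∀ φ : X ⟶ Y, φ = 0 from ⟨fun φ ψ => by rw [this φ, this ψ]⟩
  intro φ
  obtain ⟨M, a, b, rfl⟩ := DerivedCategory.exists_fac_singleFunctor_obj_of_isGE_of_isLE 0 φ
  have : ((DerivedCategory.singleFunctor A 0).obj M).IsGE (-d - 3) :=
    DerivedCategory.TStructure.t.isGE_of_ge _ (-d - 3) 0
  obtain ⟨N, a', b', rfl⟩ :=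
    DerivedCategory.exists_fac_singleFunctor_obj_of_isGE_of_isLE (-d - 3) b
  rw [‹GlobalDimLE.{w} A d›.hom_singleFunctor_eq_zero (by omega) a']
  simp
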